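/- Let τ₁ : L → L be the ℤ-linear map permuting the basis by E₁↔E₄, E₂↔E₅, E₃↔E₉ and fixing E₀, E₆, E₇, E₈. Then τ₁ is an isometry of B; it permutes {α₀,…,α₆} by τ₁(α₁)=α₀, τ₁(α₂)=α₆, τ₁(α₆)=α₂, τ₁(α₀)=α₁, and τ₁(αᵢ)=αᵢ for i=3,4,5; it satisfies τ₁(D₀)=D₁, τ₁(D₁)=D₀, τ₁(D₂)=D₂; and τ₁(δ)=δ. -/
import Mathlib


open BigOperators

/-- The symmetric bilinear form on `L = ℤ^{10}` with `B(E₀,E₀)=1`, `B(Eᵢ,Eᵢ)=-1`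
for `1 ≤ i ≤ 9`, and `B(Eᵢ,Eⱼ)=0` for `i ≠ j`. -/
def B (x y : Fin 10 → ℤ) : ℤ := x 0 * y 0 - ∑ i : Fin 9, x i.succ * y i.succ

/-- The standard basis `E₀, …, E₉` of `L`. -/
def E (i : Fin 10) : Fin 10 → ℤ := Pi.single i 1

/-- The simple roots `α₀, …, α₆` (indexed so that `α i` is `αᵢ`). -/
def α : Fin 7 → (Fin 10 → ℤ) :=
  ![E 5 - E 9, E 2 - E 3, E 1 - E 2, E 0 - E 1 - E 4 - E 6, E 6 - E 7, E 7 - E 8, E 4 - E 5]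

/-- The classes `D₀, D₁, D₂`. -/
def Dv : Fin 3 → (Fin 10 → ℤ) :=
  ![E 0 - E 4 - E 5 - E 9, E 0 - E 1 - E 2 - E 3, E 0 - E 6 - E 7 - E 8]

/-- `δ = D₀ + D₁ + D₂`. -/
def δv : Fin 10 → ℤ := Dv 0 + Dv 1 + Dv 2

/-- The edges of the Dynkin diagram of type `E₆⁽¹⁾` on the index set `{0,…,6}`. -/
def Edge (i j : Fin 7) : Prop :=
  ({i, j} : Finset (Fin 7)) ∈
    ({{1, 2}, {2, 3}, {3, 4}, {4, 5}, {3, 6}, {0, 6}} : Finset (Finset (Fin 7)))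

/-- The simple reflections `sᵢ(x) = x + B(x,αᵢ)αᵢ`. -/
def s (i : Fin 7) (x : Fin 10 → ℤ) : Fin 10 → ℤ := x + B x (α i) • α i

/-- The permutation `(1 4)(2 5)(3 9)` of the index set `{0,…,9}`. -/
def π₁ : Fin 10 → Fin 10 := ![0, 4, 5, 9, 1, 2, 6, 7, 8, 3]

/-- The linear map `τ₁ : L → L` permuting the basis by `E₁↔E₄`, `E₂↔E₅`, `E₃↔E₉`. -/
def τ₁ (x : Fin 10 → ℤ) : Fin 10 → ℤ := x ∘ π₁

theorem stmt_8 :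
    (∀ i : Fin 10, τ₁ (E i) = E (π₁ i)) ∧
    (∀ x y : Fin 10 → ℤ, B (τ₁ x) (τ₁ y) = B x y) ∧
    τ₁ (α 1) = α 0 ∧ τ₁ (α 2) = α 6 ∧ τ₁ (α 6) = α 2 ∧ τ₁ (α 0) = α 1 ∧
    τ₁ (α 3) = α 3 ∧ τ₁ (α 4) = α 4 ∧ τ₁ (α 5) = α 5 ∧
    τ₁ (Dv 0) = Dv 1 ∧ τ₁ (Dv 1) = Dv 0 ∧ τ₁ (Dv 2) = Dv 2 ∧
    τ₁ δv = δv := by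
  refine ⟨?_, ?_, ?_, ?_, ?_, ?_, ?_, ?_, ?_, ?_, ?_, ?_, ?_⟩
  · intro i
    funext j
    simp only [τ₁, Function.comp, E, Pi.single_apply]
    congr 1
    fin_cases i <;> fin_cases j <;> simp <;> decide
  · intro x y
    have hsum : ∀ z : Fin 10 → ℤ, ∑ i : Fin 9, z i.succ = (∑ i : Fin 10, z i) - z 0 := by
      intro z
      rw [show (∑ i : Fin 10, z i) = z 0 + ∑ i : Fin 9, z i.succ from Fin.sum_univ_succ z]
      ring
    have hperm : ∑ i : Fin 10, x (π₁ i) * y (π₁ i) = ∑ i : Fin 10, x i * y i :=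
      Equiv.sum_comp (⟨π₁, π₁, by decide, by decide⟩ : Equiv.Perm (Fin 10))
        (fun i => x i * y i)
    simp only [B, τ₁, Function.comp]
    rw [hsum (fun i => x (π₁ i) * y (π₁ i)), hsum (fun i => x i * y i), hperm,
      show π₁ 0 = 0 from rfl]
  all_goals funext j; fin_cases j <;> rfl
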